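/- Let T ≥ 2, let y_1,…,y_T ∈ ℝ, let γ > 0, λ ≥ 0, and let m be an integer with 1 ≤ m < T. Define C = min_{α ≥ 0} Cost(y_{1:m}, α; γ) + min_{α ≥ 0} Cost(y_{T:(m+1)}, α; 1/γ) + λ, where the first Cost is computed from the data (y_1,…,y_m) with decay γ and the second from the time-reversed data (y_T, y_{T−1}, …, y_{m+1}) with decay 1/γ. Then C equals the minimum, over all integers k ≥ 0 and segmentations 0 = τ_0 < τ_1 < … < τ_k < τ_{k+1} = T of {1,…,T} with m ∈ {τ_1,…,τ_k}, of Σ_{j=0}^{k} min_{α ≥ 0} { (1/2) Σ_{t=τ_j+1}^{τ_{j+1}} (y_t − α γ^{t−τ_{j+1}})² } + λk. -/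
import Mathlib


/-- Segment cost `D(a, b, α) = (1/2) ∑_{t=a+1}^{b} (y_t − α γ^{t−b})²`. -/
noncomputable def segCost (y : ℕ → ℝ) (γ : ℝ) (a b : ℕ) (α : ℝ) : ℝ :=
  (1/2) * ∑ t ∈ Finset.Icc (a+1) b, (y t - α * γ ^ ((t : ℤ) - (b : ℤ)))^2

/-- `τ` is a segmentation of the interval `{a+1,…,b}` with `k` changepoints:
`a = τ 0 < τ 1 < … < τ k < τ (k+1) = b`. -/
def IsSeg (a b k : ℕ) (τ : ℕ → ℕ) : Prop :=
  τ 0 = a ∧ τ (k+1) = b ∧ ∀ j ≤ k, τ j < τ (j+1)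

/-- Changepoint objective with per-segment amplitudes:
`∑_{j=0}^{k} D(τ_j, τ_{j+1}, α_j) + λ k`. -/
noncomputable def objAmp (y : ℕ → ℝ) (γ lam : ℝ) (k : ℕ) (τ : ℕ → ℕ) (α : ℕ → ℝ) : ℝ :=
  (∑ j ∈ Finset.range (k+1), segCost y γ (τ j) (τ (j+1)) (α j)) + lam * k

/-- `F(τ)`: the optimal cost of segmenting the first `τ` data points
(minimum of the changepoint objective over segmentations and nonnegative
amplitudes), with the convention `F(0) = −λ`. -/
noncomputable def Fval (y : ℕ → ℝ) (γ lam : ℝ) : ℕ → ℝ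
  | 0 => -lam
  | s+1 => sInf { c | ∃ (k : ℕ) (τ : ℕ → ℕ) (a : ℕ → ℝ), IsSeg 0 (s+1) k τ ∧
      (∀ j ≤ k, 0 ≤ a j) ∧ c = objAmp y γ lam k τ a }

/-- `Cost(y_{1:s}, α; γ) = min_{0 ≤ τ < s} { F(τ) + D(τ, s, α) + λ }`. -/
noncomputable def Cost (y : ℕ → ℝ) (γ lam : ℝ) (s : ℕ) (α : ℝ) : ℝ :=
  sInf { c | ∃ τ : ℕ, τ < s ∧ c = Fval y γ lam τ + segCost y γ τ s α + lam }

/-- Optimal segment cost `min_{α ≥ 0} D(a, b, α)`. -/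
noncomputable def segMin (y : ℕ → ℝ) (γ : ℝ) (a b : ℕ) : ℝ :=
  sInf { c | ∃ α : ℝ, 0 ≤ α ∧ c = segCost y γ a b α }

/-- Changepoint objective with each segment's amplitude optimized separately:
`∑_{j=0}^{k} min_{α ≥ 0} D(τ_j, τ_{j+1}, α) + λ k`. -/
noncomputable def objOpt (y : ℕ → ℝ) (γ lam : ℝ) (k : ℕ) (τ : ℕ → ℕ) : ℝ :=
  (∑ j ∈ Finset.range (k+1), segMin y γ (τ j) (τ (j+1))) + lam * k

/-! ### helpers -/

lemma segCost_nonneg (y : ℕ → ℝ) (γ : ℝ) (a b : ℕ) (α : ℝ) : 0 ≤ segCost y γ a b α := by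
  unfold segCost
  have : 0 ≤ ∑ t ∈ Finset.Icc (a+1) b, (y t - α * γ ^ ((t : ℤ) - (b : ℤ)))^2 :=
    Finset.sum_nonneg fun t _ => sq_nonneg _
  linarith

lemma segMin_set_nonempty (y : ℕ → ℝ) (γ : ℝ) (a b : ℕ) :
    { c | ∃ α : ℝ, 0 ≤ α ∧ c = segCost y γ a b α }.Nonempty :=
  ⟨segCost y γ a b 0, 0, le_refl 0, rfl⟩

lemma segMin_set_bdd (y : ℕ → ℝ) (γ : ℝ) (a b : ℕ) :
    BddBelow { c | ∃ α : ℝ, 0 ≤ α ∧ c = segCost y γ a b α } :=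
  ⟨0, fun c hc => by obtain ⟨α, _, rfl⟩ := hc; exact segCost_nonneg _ _ _ _ _⟩

lemma segMin_nonneg (y : ℕ → ℝ) (γ : ℝ) (a b : ℕ) : 0 ≤ segMin y γ a b :=
  le_csInf (segMin_set_nonempty y γ a b)
    (fun c hc => by obtain ⟨α, _, rfl⟩ := hc; exact segCost_nonneg _ _ _ _ _)

lemma segMin_le (y : ℕ → ℝ) (γ : ℝ) (a b : ℕ) {α : ℝ} (hα : 0 ≤ α) :
    segMin y γ a b ≤ segCost y γ a b α :=
  csInf_le (segMin_set_bdd y γ a b) ⟨α, hα, rfl⟩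

lemma objOpt_nonneg (y : ℕ → ℝ) (γ : ℝ) {lam : ℝ} (hlam : 0 ≤ lam) (k : ℕ) (τ : ℕ → ℕ) :
    0 ≤ objOpt y γ lam k τ := by
  unfold objOpt
  have : 0 ≤ ∑ j ∈ Finset.range (k+1), segMin y γ (τ j) (τ (j+1)) :=
    Finset.sum_nonneg fun j _ => segMin_nonneg _ _ _ _
  have : 0 ≤ lam * k := by positivity
  linarith [Finset.sum_nonneg (fun j (_ : j ∈ Finset.range (k+1)) => segMin_nonneg y γ (τ j) (τ (j+1)))]

lemma objAmp_nonneg (y : ℕ → ℝ) (γ : ℝ) {lam : ℝ} (hlam : 0 ≤ lam) (k : ℕ) (τ : ℕ → ℕ)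
    (a : ℕ → ℝ) : 0 ≤ objAmp y γ lam k τ a := by
  unfold objAmp
  have h1 : 0 ≤ ∑ j ∈ Finset.range (k+1), segCost y γ (τ j) (τ (j+1)) (a j) :=
    Finset.sum_nonneg fun j _ => segCost_nonneg _ _ _ _ _
  have h2 : 0 ≤ lam * k := by positivity
  linarith

lemma objOpt_le_objAmp (y : ℕ → ℝ) (γ lam : ℝ) (k : ℕ) (τ : ℕ → ℕ) {a : ℕ → ℝ}
    (ha : ∀ j ≤ k, 0 ≤ a j) : objOpt y γ lam k τ ≤ objAmp y γ lam k τ a := by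
  unfold objOpt objAmp
  have : ∑ j ∈ Finset.range (k+1), segMin y γ (τ j) (τ (j+1)) ≤
      ∑ j ∈ Finset.range (k+1), segCost y γ (τ j) (τ (j+1)) (a j) := by
    apply Finset.sum_le_sum
    intro j hj
    exact segMin_le _ _ _ _ (ha j (Nat.lt_succ_iff.mp (Finset.mem_range.mp hj)))
  linarith

lemma seg_lt {k : ℕ} {τ : ℕ → ℕ} (h : ∀ j ≤ k, τ j < τ (j+1)) :
    ∀ i j, i < j → j ≤ k + 1 → τ i < τ j := by
  intro i j
  induction j with
  | zero => omega
  | succ n ih =>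
    intro hij hjk
    rcases Nat.lt_succ_iff.mp hij with h'
    rcases lt_or_eq_of_le h' with h2 | h2
    · exact lt_trans (ih h2 (by omega)) (h n (by omega))
    · subst h2; exact h i (by omega)

lemma seg_single {a b : ℕ} (hab : a < b) : IsSeg a b 0 (fun j => if j = 0 then a else b) := by
  refine ⟨rfl, rfl, ?_⟩
  intro j hj
  simp only [Nat.le_zero] at hj
  subst hj
  simpa using hab

/-! ### reversal -/

lemma segCost_rev (y : ℕ → ℝ) {γ : ℝ} (hγ : 0 < γ) (T a b : ℕ) (hab : a < b) (hbT : b ≤ T)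
    (α : ℝ) :
    segCost (fun t => y (T + 1 - t)) (1/γ) a b α
      = segCost y γ (T - b) (T - a) (α * γ ^ ((b:ℤ) - (a:ℤ) - 1)) := by
  unfold segCost
  congr 1
  refine Finset.sum_nbij' (fun t => T + 1 - t) (fun u => T + 1 - u) ?_ ?_ ?_ ?_ ?_
  · intro t ht
    simp only [Finset.mem_Icc] at ht ⊢
    omega
  · intro u hu
    simp only [Finset.mem_Icc] at hu ⊢
    omega
  · intro t ht
    simp only [Finset.mem_Icc] at ht
    show T + 1 - (T + 1 - t) = t
    omega
  · intro u hu
    simp only [Finset.mem_Icc] at hu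
    show T + 1 - (T + 1 - u) = u
    omega
  · intro t ht
    simp only [Finset.mem_Icc] at ht
    have hγ' : γ ≠ 0 := ne_of_gt hγ
    have h1 : ((T + 1 - t : ℕ) : ℤ) = (T : ℤ) + 1 - t := by omega
    have h2 : ((T - a : ℕ) : ℤ) = (T : ℤ) - a := by omega
    have key : α * (1/γ) ^ ((t:ℤ) - (b:ℤ))
        = (α * γ ^ ((b:ℤ) - (a:ℤ) - 1)) * γ ^ (((T + 1 - t : ℕ):ℤ) - ((T - a : ℕ):ℤ)) := by
      have e1 : ((T + 1 - t : ℕ):ℤ) - ((T - a : ℕ):ℤ) = (b:ℤ) - t - ((b:ℤ) - a - 1) := by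
        omega
      rw [e1, one_div, inv_zpow, ← zpow_neg, mul_assoc, ← zpow_add₀ hγ']
      have e2 : -((t:ℤ) - (b:ℤ)) = (b:ℤ) - (a:ℤ) - 1 + ((b:ℤ) - t - ((b:ℤ) - a - 1)) := by
        ring
      rw [e2]
    show (y (T + 1 - t) - α * (1/γ) ^ ((t:ℤ) - (b:ℤ)))^2
        = (y (T + 1 - t) - (α * γ ^ ((b:ℤ) - (a:ℤ) - 1)) * γ ^ (((T + 1 - t : ℕ):ℤ) - ((T - a : ℕ):ℤ)))^2
    rw [key]

lemma segMin_rev (y : ℕ → ℝ) {γ : ℝ} (hγ : 0 < γ) (T a b : ℕ) (hab : a < b) (hbT : b ≤ T) :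
    segMin (fun t => y (T + 1 - t)) (1/γ) a b = segMin y γ (T - b) (T - a) := by
  unfold segMin
  congr 1
  ext c
  constructor
  · rintro ⟨α, hα, rfl⟩
    exact ⟨α * γ ^ ((b:ℤ) - (a:ℤ) - 1),
      mul_nonneg hα (le_of_lt (zpow_pos hγ _)),
      (segCost_rev y hγ T a b hab hbT α).symm ▸ rfl⟩
  · rintro ⟨β, hβ, rfl⟩
    refine ⟨β * γ ^ ((a:ℤ) + 1 - (b:ℤ)), mul_nonneg hβ (le_of_lt (zpow_pos hγ _)), ?_⟩
    rw [segCost_rev y hγ T a b hab hbT]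
    congr 1
    rw [mul_assoc, ← zpow_add₀ (ne_of_gt hγ)]
    have : (a:ℤ) + 1 - (b:ℤ) + ((b:ℤ) - (a:ℤ) - 1) = 0 := by ring
    rw [this, zpow_zero, mul_one]

/-! ### sets -/

def ASet (y : ℕ → ℝ) (γ lam : ℝ) (s : ℕ) : Set ℝ :=
  { c | ∃ (k : ℕ) (τ : ℕ → ℕ) (a : ℕ → ℝ), IsSeg 0 s k τ ∧
      (∀ j ≤ k, 0 ≤ a j) ∧ c = objAmp y γ lam k τ a }

def OSet (y : ℕ → ℝ) (γ lam : ℝ) (a b : ℕ) : Set ℝ :=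
  { c | ∃ (k : ℕ) (τ : ℕ → ℕ), IsSeg a b k τ ∧ c = objOpt y γ lam k τ }

lemma Fval_succ_eq (y : ℕ → ℝ) (γ lam : ℝ) (s : ℕ) :
    Fval y γ lam (s+1) = sInf (ASet y γ lam (s+1)) := rfl

lemma ASet_nonempty (y : ℕ → ℝ) (γ lam : ℝ) {s : ℕ} (hs : 0 < s) :
    (ASet y γ lam s).Nonempty := by
  refine ⟨objAmp y γ lam 0 (fun j => if j = 0 then 0 else s) (fun _ => 0),
    0, _, _, seg_single hs, fun j _ => le_refl 0, rfl⟩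

lemma ASet_bdd (y : ℕ → ℝ) (γ : ℝ) {lam : ℝ} (hlam : 0 ≤ lam) (s : ℕ) :
    BddBelow (ASet y γ lam s) := by
  refine ⟨0, fun c hc => ?_⟩
  obtain ⟨k, τ, a, _, _, rfl⟩ := hc
  exact objAmp_nonneg y γ hlam k τ a

lemma OSet_nonempty (y : ℕ → ℝ) (γ lam : ℝ) {a b : ℕ} (hab : a < b) :
    (OSet y γ lam a b).Nonempty :=
  ⟨objOpt y γ lam 0 (fun j => if j = 0 then a else b), 0, _, seg_single hab, rfl⟩

lemma OSet_bdd (y : ℕ → ℝ) (γ : ℝ) {lam : ℝ} (hlam : 0 ≤ lam) (a b : ℕ) :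
    BddBelow (OSet y γ lam a b) := by
  refine ⟨0, fun c hc => ?_⟩
  obtain ⟨k, τ, _, rfl⟩ := hc
  exact objOpt_nonneg y γ hlam k τ

lemma Fval_ge (y : ℕ → ℝ) (γ : ℝ) {lam : ℝ} (hlam : 0 ≤ lam) (s : ℕ) :
    -lam ≤ Fval y γ lam s := by
  cases s with
  | zero => simp [Fval]
  | succ n =>
    rw [Fval_succ_eq]
    have h0 : (0:ℝ) ≤ sInf (ASet y γ lam (n+1)) :=
      le_csInf (ASet_nonempty y γ lam (Nat.succ_pos n)) (fun c hc => by
        obtain ⟨k, τ, a, _, _, rfl⟩ := hc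
        exact objAmp_nonneg y γ hlam k τ a)
    linarith

/-- ε-approximation: ∃ amplitudes with objAmp < objOpt + ε. -/
lemma exists_objAmp_lt (y : ℕ → ℝ) (γ lam : ℝ) (k : ℕ) (τ : ℕ → ℕ) {ε : ℝ} (hε : 0 < ε) :
    ∃ a : ℕ → ℝ, (∀ j ≤ k, 0 ≤ a j) ∧ objAmp y γ lam k τ a < objOpt y γ lam k τ + ε := by
  have hδ : 0 < ε / (k+1) := by positivity
  have H : ∀ j : ℕ, ∃ α : ℝ, 0 ≤ α ∧
      segCost y γ (τ j) (τ (j+1)) α < segMin y γ (τ j) (τ (j+1)) + ε / (k+1) := by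
    intro j
    have hlt : segMin y γ (τ j) (τ (j+1)) < segMin y γ (τ j) (τ (j+1)) + ε / (k+1) := by
      linarith
    obtain ⟨c, hc, hclt⟩ := exists_lt_of_csInf_lt (segMin_set_nonempty y γ (τ j) (τ (j+1))) hlt
    obtain ⟨α, hα, rfl⟩ := hc
    exact ⟨α, hα, hclt⟩
  choose a ha hlt using H
  refine ⟨a, fun j _ => ha j, ?_⟩
  unfold objAmp objOpt
  have hsum : ∑ j ∈ Finset.range (k+1), segCost y γ (τ j) (τ (j+1)) (a j)
      < ∑ j ∈ Finset.range (k+1), (segMin y γ (τ j) (τ (j+1)) + ε / (k+1)) :=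
    Finset.sum_lt_sum_of_nonempty ⟨0, Finset.mem_range.mpr (Nat.succ_pos k)⟩
      (fun j _ => hlt j)
  rw [Finset.sum_add_distrib, Finset.sum_const, Finset.card_range] at hsum
  have : (k+1) • (ε / ((k:ℝ)+1)) = ε := by
    rw [nsmul_eq_mul]
    push_cast
    field_simp
  rw [this] at hsum
  linarith

lemma sInf_ASet_eq_sInf_OSet (y : ℕ → ℝ) (γ : ℝ) {lam : ℝ} (hlam : 0 ≤ lam) {s : ℕ}
    (hs : 0 < s) : sInf (ASet y γ lam s) = sInf (OSet y γ lam 0 s) := by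
  apply le_antisymm
  · -- sInf ASet ≤ each element of OSet
    apply le_csInf (OSet_nonempty y γ lam hs)
    intro c hc
    obtain ⟨k, τ, hseg, rfl⟩ := hc
    rw [le_iff_forall_pos_lt_add]
    intro ε hε
    obtain ⟨a, ha, hlt⟩ := exists_objAmp_lt y γ lam k τ hε
    calc sInf (ASet y γ lam s) ≤ objAmp y γ lam k τ a :=
          csInf_le (ASet_bdd y γ hlam s) ⟨k, τ, a, hseg, ha, rfl⟩
      _ < objOpt y γ lam k τ + ε := hlt
  · apply le_csInf (ASet_nonempty y γ lam hs)
    intro c hc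
    obtain ⟨k, τ, a, hseg, ha, rfl⟩ := hc
    calc sInf (OSet y γ lam 0 s) ≤ objOpt y γ lam k τ :=
          csInf_le (OSet_bdd y γ hlam 0 s) ⟨k, τ, hseg, rfl⟩
      _ ≤ objAmp y γ lam k τ a := objOpt_le_objAmp y γ lam k τ ha

/-! ### Cost level -/

lemma CostSet_nonempty (y : ℕ → ℝ) (γ lam : ℝ) {s : ℕ} (hs : 0 < s) (α : ℝ) :
    { c | ∃ τ : ℕ, τ < s ∧ c = Fval y γ lam τ + segCost y γ τ s α + lam }.Nonempty :=
  ⟨_, 0, hs, rfl⟩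

lemma CostSet_bdd (y : ℕ → ℝ) (γ : ℝ) {lam : ℝ} (hlam : 0 ≤ lam) (s : ℕ) (α : ℝ) :
    BddBelow { c | ∃ τ : ℕ, τ < s ∧ c = Fval y γ lam τ + segCost y γ τ s α + lam } := by
  refine ⟨0, fun c hc => ?_⟩
  obtain ⟨τ', _, rfl⟩ := hc
  have h1 := Fval_ge y γ hlam τ'
  have h2 := segCost_nonneg y γ τ' s α
  linarith

lemma Cost_nonneg (y : ℕ → ℝ) (γ : ℝ) {lam : ℝ} (hlam : 0 ≤ lam) {s : ℕ} (hs : 0 < s)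
    (α : ℝ) : 0 ≤ Cost y γ lam s α := by
  unfold Cost
  apply le_csInf (CostSet_nonempty y γ lam hs α)
  intro c hc
  obtain ⟨τ', _, rfl⟩ := hc
  have h1 := Fval_ge y γ hlam τ'
  have h2 := segCost_nonneg y γ τ' s α
  linarith

lemma objAmp_extend (y : ℕ → ℝ) (γ lam : ℝ) {p s k : ℕ} {τ : ℕ → ℕ} {a : ℕ → ℝ}
    (hseg : IsSeg 0 p k τ) (hps : p < s) (α : ℝ) :
    IsSeg 0 s (k+1) (fun j => if j ≤ k+1 then τ j else s) ∧
    objAmp y γ lam (k+1) (fun j => if j ≤ k+1 then τ j else s)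
        (fun j => if j ≤ k then a j else α)
      = objAmp y γ lam k τ a + segCost y γ p s α + lam := by
  obtain ⟨h0, hk1, hmono⟩ := hseg
  constructor
  · refine ⟨by simp [h0], by simp, ?_⟩
    intro j hj
    rcases Nat.lt_or_ge j (k+1) with h | h
    · have hj1 : j ≤ k := by omega
      simp only [if_pos (by omega : j ≤ k+1), if_pos (by omega : j+1 ≤ k+1)]
      exact hmono j hj1
    · have hj2 : j = k+1 := by omega
      subst hj2
      simp only [if_pos (le_refl (k+1)), if_neg (by omega : ¬ k+1+1 ≤ k+1)]
      rw [hk1]; exact hps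
  · unfold objAmp
    rw [Finset.sum_range_succ]
    have hsum : ∑ j ∈ Finset.range (k+1),
        segCost y γ (if j ≤ k+1 then τ j else s) (if j+1 ≤ k+1 then τ (j+1) else s)
          (if j ≤ k then a j else α)
        = ∑ j ∈ Finset.range (k+1), segCost y γ (τ j) (τ (j+1)) (a j) := by
      apply Finset.sum_congr rfl
      intro j hj
      have hj' : j ≤ k := Nat.lt_succ_iff.mp (Finset.mem_range.mp hj)
      rw [if_pos (by omega : j ≤ k+1), if_pos (by omega : j+1 ≤ k+1), if_pos hj']
    rw [hsum]
    beta_reduce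
    rw [if_pos (le_refl (k+1)), if_neg (by omega : ¬ k+1+1 ≤ k+1),
      if_neg (by omega : ¬ k+1 ≤ k), hk1]
    push_cast
    ring

lemma sInf_CSet_eq (y : ℕ → ℝ) (γ : ℝ) {lam : ℝ} (hlam : 0 ≤ lam) {s : ℕ} (hs : 0 < s) :
    sInf { c | ∃ α : ℝ, 0 ≤ α ∧ c = Cost y γ lam s α } = sInf (ASet y γ lam s) := by
  apply le_antisymm
  · -- sInf CSet ≤ every element of ASet
    apply le_csInf (ASet_nonempty y γ lam hs)
    intro c hc
    obtain ⟨k, τ, a, hseg, ha, rfl⟩ := hc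
    have hCbdd : BddBelow { c | ∃ α : ℝ, 0 ≤ α ∧ c = Cost y γ lam s α } := by
      refine ⟨0, fun c hc => ?_⟩
      obtain ⟨α, hα, rfl⟩ := hc
      exact Cost_nonneg y γ hlam hs α
    cases k with
    | zero =>
      -- objAmp = segCost 0 s (a 0); Cost s (a 0) ≤ Fval 0 + segCost 0 s (a 0) + lam
      have ha0 : 0 ≤ a 0 := ha 0 (le_refl 0)
      have h1 : Cost y γ lam s (a 0) ≤ objAmp y γ lam 0 τ a := by
        unfold Cost
        have hmem : Fval y γ lam 0 + segCost y γ 0 s (a 0) + lam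
            ∈ { c | ∃ τ' : ℕ, τ' < s ∧ c = Fval y γ lam τ' + segCost y γ τ' s (a 0) + lam } :=
          ⟨0, hs, rfl⟩
        have h2 := csInf_le (CostSet_bdd y γ hlam s (a 0)) hmem
        obtain ⟨h0, hk1, _⟩ := hseg
        unfold objAmp
        rw [Finset.sum_range_succ, Finset.sum_range_zero, h0, hk1]
        have hF0 : Fval y γ lam 0 = -lam := rfl
        rw [hF0] at h2
        push_cast
        linarith
      calc sInf { c | ∃ α : ℝ, 0 ≤ α ∧ c = Cost y γ lam s α }
          ≤ Cost y γ lam s (a 0) := csInf_le hCbdd ⟨a 0, ha0, rfl⟩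
        _ ≤ objAmp y γ lam 0 τ a := h1
    | succ k =>
      obtain ⟨h0, hk1, hmono⟩ := hseg
      have hsegk : IsSeg 0 (τ (k+1)) k τ := ⟨h0, rfl, fun j hj => hmono j (by omega)⟩
      have hτk1 : 1 ≤ τ (k+1) := by
        have := seg_lt hmono 0 (k+1) (Nat.succ_pos k) (by omega)
        omega
      have hτks : τ (k+1) < s := by
        have := hmono (k+1) (le_refl _)
        omega
      have hak : 0 ≤ a (k+1) := ha (k+1) (le_refl _)
      -- decomposition
      have hdec : objAmp y γ lam (k+1) τ a
          = objAmp y γ lam k τ a + segCost y γ (τ (k+1)) s (a (k+1)) + lam := by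
        unfold objAmp
        rw [Finset.sum_range_succ, hk1]
        push_cast
        ring
      have hF : Fval y γ lam (τ (k+1)) ≤ objAmp y γ lam k τ a := by
        obtain ⟨n, hn⟩ : ∃ n, τ (k+1) = n + 1 := ⟨τ (k+1) - 1, by omega⟩
        rw [hn]
        rw [Fval_succ_eq]
        apply csInf_le (ASet_bdd y γ hlam (n+1))
        exact ⟨k, τ, a, hn ▸ hsegk, fun j hj => ha j (by omega), rfl⟩
      have h1 : Cost y γ lam s (a (k+1)) ≤ objAmp y γ lam (k+1) τ a := by
        unfold Cost
        have hmem : Fval y γ lam (τ (k+1)) + segCost y γ (τ (k+1)) s (a (k+1)) + lam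
            ∈ { c | ∃ τ' : ℕ, τ' < s ∧
                c = Fval y γ lam τ' + segCost y γ τ' s (a (k+1)) + lam } :=
          ⟨τ (k+1), hτks, rfl⟩
        have h2 := csInf_le (CostSet_bdd y γ hlam s (a (k+1))) hmem
        rw [hdec]
        linarith
      calc sInf { c | ∃ α : ℝ, 0 ≤ α ∧ c = Cost y γ lam s α }
          ≤ Cost y γ lam s (a (k+1)) := csInf_le hCbdd ⟨a (k+1), hak, rfl⟩
        _ ≤ objAmp y γ lam (k+1) τ a := h1
  · -- sInf ASet ≤ every element of CSet
    have hne : { c | ∃ α : ℝ, 0 ≤ α ∧ c = Cost y γ lam s α }.Nonempty :=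
      ⟨Cost y γ lam s 0, 0, le_refl 0, rfl⟩
    apply le_csInf hne
    intro c hc
    obtain ⟨α, hα, rfl⟩ := hc
    unfold Cost
    apply le_csInf (CostSet_nonempty y γ lam hs α)
    intro c hc
    obtain ⟨p, hp, rfl⟩ := hc
    cases p with
    | zero =>
      -- Fval 0 + segCost 0 s α + lam = segCost 0 s α = objAmp of single segment
      have hmem : segCost y γ 0 s α ∈ ASet y γ lam s := by
        refine ⟨0, fun j => if j = 0 then 0 else s, fun _ => α, seg_single hs,
          fun j _ => hα, ?_⟩
        unfold objAmp
        simp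
      have := csInf_le (ASet_bdd y γ hlam s) hmem
      simp only [Fval]
      push_cast
      linarith
    | succ n =>
      rw [Fval_succ_eq]
      -- every element of ASet (n+1) extends to one of ASet s
      have key : ∀ c' ∈ ASet y γ lam (n+1),
          sInf (ASet y γ lam s) ≤ c' + segCost y γ (n+1) s α + lam := by
        intro c' hc'
        obtain ⟨k, τ, a, hseg, ha, rfl⟩ := hc'
        obtain ⟨hseg', heq⟩ := objAmp_extend y γ lam (a := a) hseg hp α
        have hmem : objAmp y γ lam k τ a + segCost y γ (n+1) s α + lam
            ∈ ASet y γ lam s := by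
          rw [← heq]
          refine ⟨k+1, _, _, hseg', ?_, rfl⟩
          intro j hj
          by_cases h : j ≤ k
          · simp only [if_pos h]; exact ha j h
          · simp only [if_neg h]; exact hα
        exact csInf_le (ASet_bdd y γ hlam s) hmem
      have h2 : sInf (ASet y γ lam s) - segCost y γ (n+1) s α - lam
          ≤ sInf (ASet y γ lam (n+1)) := by
        apply le_csInf (ASet_nonempty y γ lam (Nat.succ_pos n))
        intro c' hc'
        have := key c' hc'
        linarith
      linarith

/-! ### bounds on segmentations -/

lemma seg_le_right {a b k : ℕ} {τ : ℕ → ℕ} (h : IsSeg a b k τ) :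
    ∀ j ≤ k+1, τ j ≤ b := by
  obtain ⟨h0, hk1, hmono⟩ := h
  intro j hj
  rcases lt_or_eq_of_le hj with h' | h'
  · exact le_of_lt (hk1 ▸ seg_lt hmono j (k+1) h' (le_refl _))
  · rw [h']; exact le_of_eq hk1

lemma seg_le_left {a b k : ℕ} {τ : ℕ → ℕ} (h : IsSeg a b k τ) :
    ∀ j ≤ k+1, a ≤ τ j := by
  obtain ⟨h0, hk1, hmono⟩ := h
  intro j hj
  cases j with
  | zero => exact le_of_eq h0.symm
  | succ n => exact le_of_lt (h0 ▸ seg_lt hmono 0 (n+1) (Nat.succ_pos n) hj)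

/-! ### reversal of segmentations -/

lemma OSet_rev (y : ℕ → ℝ) {γ : ℝ} (hγ : 0 < γ) (lam : ℝ) {m T : ℕ} (hm2 : m < T) :
    OSet (fun t => y (T + 1 - t)) (1/γ) lam 0 (T - m) = OSet y γ lam m T := by
  ext c
  constructor
  · rintro ⟨k, τ, hseg, rfl⟩
    obtain ⟨h0, hk1, hmono⟩ := hseg
    have hub : ∀ j ≤ k+1, τ j ≤ T - m := seg_le_right ⟨h0, hk1, hmono⟩
    set σ : ℕ → ℕ := fun j => T - τ (k+1-j) with hσ
    have hsegσ : IsSeg m T k σ := by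
      refine ⟨?_, ?_, ?_⟩
      · show T - τ (k+1-0) = m
        rw [Nat.sub_zero, hk1]
        omega
      · show T - τ (k+1-(k+1)) = T
        rw [Nat.sub_self, h0]
        omega
      · intro j hj
        show T - τ (k+1-j) < T - τ (k+1-(j+1))
        have e1 : k+1-(j+1) = k - j := by omega
        have e2 : k+1-j = (k-j)+1 := by omega
        rw [e1, e2]
        have h1 : τ (k-j) < τ ((k-j)+1) := hmono (k-j) (by omega)
        have h2 : τ ((k-j)+1) ≤ T - m := hub ((k-j)+1) (by omega)
        omega
    refine ⟨k, σ, hsegσ, ?_⟩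
    unfold objOpt
    congr 1
    rw [← Finset.sum_range_reflect
      (fun j => segMin (fun t => y (T + 1 - t)) (1/γ) (τ j) (τ (j+1))) (k+1)]
    apply Finset.sum_congr rfl
    intro j hj
    have hj' : j ≤ k := Nat.lt_succ_iff.mp (Finset.mem_range.mp hj)
    have h1 : k + 1 - 1 - j = k - j := by omega
    rw [h1]
    have hlt : τ (k-j) < τ ((k-j)+1) := hmono (k-j) (by omega)
    have hle : τ ((k-j)+1) ≤ T := le_trans (hub ((k-j)+1) (by omega)) (by omega)
    rw [segMin_rev y hγ T (τ (k-j)) (τ ((k-j)+1)) hlt hle]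
    have h2 : σ j = T - τ ((k-j)+1) := by
      show T - τ (k+1-j) = T - τ ((k-j)+1)
      congr 2
      omega
    have h3 : σ (j+1) = T - τ (k-j) := by
      show T - τ (k+1-(j+1)) = T - τ (k-j)
      congr 2
      omega
    rw [h2, h3]
  · rintro ⟨k, σ, hseg, rfl⟩
    obtain ⟨h0, hk1, hmono⟩ := hseg
    have hub : ∀ j ≤ k+1, σ j ≤ T := seg_le_right ⟨h0, hk1, hmono⟩
    have hlb : ∀ j ≤ k+1, m ≤ σ j := seg_le_left ⟨h0, hk1, hmono⟩
    set τ : ℕ → ℕ := fun j => T - σ (k+1-j) with hτ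
    have hsegτ : IsSeg 0 (T - m) k τ := by
      refine ⟨?_, ?_, ?_⟩
      · show T - σ (k+1-0) = 0
        rw [Nat.sub_zero, hk1]
        omega
      · show T - σ (k+1-(k+1)) = T - m
        rw [Nat.sub_self, h0]
      · intro j hj
        show T - σ (k+1-j) < T - σ (k+1-(j+1))
        have e1 : k+1-(j+1) = k - j := by omega
        have e2 : k+1-j = (k-j)+1 := by omega
        rw [e1, e2]
        have h1 : σ (k-j) < σ ((k-j)+1) := hmono (k-j) (by omega)
        have h2 : σ ((k-j)+1) ≤ T := hub ((k-j)+1) (by omega)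
        omega
    refine ⟨k, τ, hsegτ, ?_⟩
    unfold objOpt
    congr 1
    rw [← Finset.sum_range_reflect (fun j => segMin y γ (σ j) (σ (j+1))) (k+1)]
    apply Finset.sum_congr rfl
    intro j hj
    have hj' : j ≤ k := Nat.lt_succ_iff.mp (Finset.mem_range.mp hj)
    have h1 : k + 1 - 1 - j = k - j := by omega
    rw [h1]
    have hτj : τ j = T - σ ((k-j)+1) := by
      show T - σ (k+1-j) = T - σ ((k-j)+1)
      congr 2
      omega
    have hτj1 : τ (j+1) = T - σ (k-j) := by
      show T - σ (k+1-(j+1)) = T - σ (k-j)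
      congr 2
      omega
    have hlt : σ (k-j) < σ ((k-j)+1) := hmono (k-j) (by omega)
    have hub1 : σ ((k-j)+1) ≤ T := hub ((k-j)+1) (by omega)
    have hlb0 : m ≤ σ (k-j) := hlb (k-j) (by omega)
    have hltτ : τ j < τ (j+1) := by rw [hτj, hτj1]; omega
    have hleτ : τ (j+1) ≤ T := by rw [hτj1]; omega
    rw [segMin_rev y hγ T (τ j) (τ (j+1)) hltτ hleτ]
    congr 1
    · rw [hτj1]; omega
    · omega

/-! ### splitting / combining segmentations at m -/

lemma objOpt_split (y : ℕ → ℝ) (γ lam : ℝ) {T m p q : ℕ} {τ : ℕ → ℕ}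
    (hseg : IsSeg 0 T (p+1+q) τ) (hm : τ (p+1) = m) :
    IsSeg 0 m p τ ∧ IsSeg m T q (fun j => τ (p+1+j)) ∧
    objOpt y γ lam (p+1+q) τ
      = objOpt y γ lam p τ + objOpt y γ lam q (fun j => τ (p+1+j)) + lam := by
  obtain ⟨h0, hk1, hmono⟩ := hseg
  refine ⟨⟨h0, hm, fun j hj => hmono j (by omega)⟩,
    ⟨hm, hk1, fun j hj => hmono (p+1+j) (by omega)⟩, ?_⟩
  unfold objOpt
  have hsplit : p+1+q+1 = (p+1)+(q+1) := by omega
  rw [hsplit, Finset.sum_range_add]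
  show ∑ j ∈ Finset.range (p+1), segMin y γ (τ j) (τ (j+1)) +
      ∑ x ∈ Finset.range (q+1), segMin y γ (τ (p+1+x)) (τ (p+1+x+1)) + lam * ((p+1+q : ℕ):ℝ)
    = (∑ j ∈ Finset.range (p+1), segMin y γ (τ j) (τ (j+1)) + lam * (p:ℕ)) +
      (∑ x ∈ Finset.range (q+1), segMin y γ (τ (p+1+x)) (τ (p+1+x+1)) + lam * (q:ℕ)) + lam
  push_cast
  ring

lemma objOpt_combine (y : ℕ → ℝ) (γ lam : ℝ) {T m p q : ℕ} {τ1 τ2 : ℕ → ℕ}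
    (h1 : IsSeg 0 m p τ1) (h2 : IsSeg m T q τ2) :
    IsSeg 0 T (p+1+q) (fun j => if j ≤ p+1 then τ1 j else τ2 (j-(p+1))) ∧
    (fun j => if j ≤ p+1 then τ1 j else τ2 (j-(p+1))) (p+1) = m ∧
    objOpt y γ lam (p+1+q) (fun j => if j ≤ p+1 then τ1 j else τ2 (j-(p+1)))
      = objOpt y γ lam p τ1 + objOpt y γ lam q τ2 + lam := by
  obtain ⟨h10, h11, h1m⟩ := h1
  obtain ⟨h20, h21, h2m⟩ := h2
  have hmid : (fun j => if j ≤ p+1 then τ1 j else τ2 (j-(p+1))) (p+1) = m := by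
    simp only [if_pos (le_refl (p+1))]
    exact h11
  refine ⟨⟨?_, ?_, ?_⟩, hmid, ?_⟩
  · simp only [if_pos (by omega : 0 ≤ p+1)]
    exact h10
  · beta_reduce
    rw [if_neg (by omega : ¬ p+1+q+1 ≤ p+1)]
    have : p+1+q+1-(p+1) = q+1 := by omega
    rw [this, h21]
  · intro j hj
    beta_reduce
    rcases Nat.lt_or_ge j (p+1) with h | h
    · rw [if_pos (by omega : j ≤ p+1), if_pos (by omega : j+1 ≤ p+1)]
      exact h1m j (by omega)
    · rcases Nat.eq_or_lt_of_le h with h' | h'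
      · rw [if_pos (by omega : j ≤ p+1), if_neg (by omega : ¬ j+1 ≤ p+1)]
        rw [← h']
        have e1 : p+1+1-(p+1) = 1 := by omega
        rw [e1, h11, ← h20]
        exact h2m 0 (by omega)
      · rw [if_neg (by omega : ¬ j ≤ p+1), if_neg (by omega : ¬ j+1 ≤ p+1)]
        have e1 : j+1-(p+1) = (j-(p+1))+1 := by omega
        rw [e1]
        exact h2m (j-(p+1)) (by omega)
  · unfold objOpt
    have hsplit : p+1+q+1 = (p+1)+(q+1) := by omega
    rw [hsplit, Finset.sum_range_add]
    have e1 : ∑ j ∈ Finset.range (p+1),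
        segMin y γ (if j ≤ p+1 then τ1 j else τ2 (j-(p+1)))
          (if j+1 ≤ p+1 then τ1 (j+1) else τ2 (j+1-(p+1)))
        = ∑ j ∈ Finset.range (p+1), segMin y γ (τ1 j) (τ1 (j+1)) := by
      apply Finset.sum_congr rfl
      intro j hj
      have hj' : j ≤ p := Nat.lt_succ_iff.mp (Finset.mem_range.mp hj)
      rw [if_pos (by omega : j ≤ p+1), if_pos (by omega : j+1 ≤ p+1)]
    have e2 : ∑ x ∈ Finset.range (q+1),
        segMin y γ (if p+1+x ≤ p+1 then τ1 (p+1+x) else τ2 (p+1+x-(p+1)))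
          (if p+1+x+1 ≤ p+1 then τ1 (p+1+x+1) else τ2 (p+1+x+1-(p+1)))
        = ∑ x ∈ Finset.range (q+1), segMin y γ (τ2 x) (τ2 (x+1)) := by
      apply Finset.sum_congr rfl
      intro x hx
      have e3 : p+1+x+1-(p+1) = x+1 := by omega
      rw [if_neg (by omega : ¬ p+1+x+1 ≤ p+1), e3]
      rcases Nat.eq_zero_or_pos x with h | h
      · subst h
        rw [if_pos (by omega : p+1+0 ≤ p+1)]
        have e4 : p+1+0 = p+1 := by omega
        rw [e4, h11, ← h20]
      · rw [if_neg (by omega : ¬ p+1+x ≤ p+1)]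
        have e4 : p+1+x-(p+1) = x := by omega
        rw [e4]
    beta_reduce
    rw [e1, e2]
    push_cast
    ring

/-- `C = min_{α ≥ 0} Cost(y_{1:m}, α; γ) + min_{α ≥ 0} Cost(y_{T:(m+1)}, α; 1/γ) + λ`
equals the minimum of the (amplitude-optimized) changepoint objective over segmentations of
`{1,…,T}` whose changepoint set contains `m`.  The reversed data `y_{T:(m+1)}` has length
`T − m` with entry `t` equal to `y (T + 1 - t)`. -/
theorem C_eq_changepoint_with_m (T : ℕ) (hT : 2 ≤ T) (y : ℕ → ℝ)
    (γ lam : ℝ) (hγ : 0 < γ) (hlam : 0 ≤ lam) (m : ℕ) (hm1 : 1 ≤ m) (hm2 : m < T) :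
    sInf { c | ∃ α : ℝ, 0 ≤ α ∧ c = Cost y γ lam m α } +
      sInf { c | ∃ α : ℝ, 0 ≤ α ∧
        c = Cost (fun t => y (T + 1 - t)) (1/γ) lam (T - m) α } + lam =
    sInf { c | ∃ (k : ℕ) (τ : ℕ → ℕ), IsSeg 0 T k τ ∧
        (∃ j, 1 ≤ j ∧ j ≤ k ∧ τ j = m) ∧ c = objOpt y γ lam k τ } := by
  have hm : 0 < m := hm1
  have hTm : 0 < T - m := by omega
  have hγ' : 0 < 1/γ := by positivity
  -- rewrite the two Cost infima
  have e1 : sInf { c | ∃ α : ℝ, 0 ≤ α ∧ c = Cost y γ lam m α }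
      = sInf (OSet y γ lam 0 m) := by
    rw [sInf_CSet_eq y γ hlam hm, sInf_ASet_eq_sInf_OSet y γ hlam hm]
  have e2 : sInf { c | ∃ α : ℝ, 0 ≤ α ∧
        c = Cost (fun t => y (T + 1 - t)) (1/γ) lam (T - m) α }
      = sInf (OSet y γ lam m T) := by
    rw [sInf_CSet_eq (fun t => y (T + 1 - t)) (1/γ) hlam hTm,
      sInf_ASet_eq_sInf_OSet (fun t => y (T + 1 - t)) (1/γ) hlam hTm,
      OSet_rev y hγ lam hm2]
  rw [e1, e2]
  -- now show sInf OSet1 + sInf OSet2 + lam = sInf R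
  set R : Set ℝ := { c | ∃ (k : ℕ) (τ : ℕ → ℕ), IsSeg 0 T k τ ∧
      (∃ j, 1 ≤ j ∧ j ≤ k ∧ τ j = m) ∧ c = objOpt y γ lam k τ } with hR
  have hRbdd : BddBelow R := by
    refine ⟨0, fun c hc => ?_⟩
    obtain ⟨k, τ, _, _, rfl⟩ := hc
    exact objOpt_nonneg y γ hlam k τ
  have hRne : R.Nonempty := by
    obtain ⟨hseg, hmid, _⟩ := objOpt_combine y γ lam (p := 0) (q := 0)
      (seg_single hm) (seg_single hm2)
    exact ⟨objOpt y γ lam (0+1+0) _, 0+1+0, _, hseg, ⟨1, le_refl 1, by omega, hmid⟩, rfl⟩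
  have hO1ne := OSet_nonempty y γ lam hm
  have hO2ne := OSet_nonempty y γ lam hm2
  have hO1bdd := OSet_bdd y γ hlam 0 m
  have hO2bdd := OSet_bdd y γ hlam m T
  apply le_antisymm
  · -- decompose each element of R
    apply le_csInf hRne
    intro c hc
    obtain ⟨k, τ, hseg, ⟨j, hj1, hjk, hjm⟩, rfl⟩ := hc
    obtain ⟨p, rfl⟩ : ∃ p, j = p + 1 := ⟨j - 1, by omega⟩
    obtain ⟨q, rfl⟩ : ∃ q, k = p + 1 + q := ⟨k - (p+1), by omega⟩
    obtain ⟨hseg1, hseg2, heq⟩ := objOpt_split y γ lam hseg hjm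
    have hc1 : objOpt y γ lam p τ ∈ OSet y γ lam 0 m := ⟨p, τ, hseg1, rfl⟩
    have hc2 : objOpt y γ lam q (fun j => τ (p+1+j)) ∈ OSet y γ lam m T :=
      ⟨q, _, hseg2, rfl⟩
    have h1 := csInf_le hO1bdd hc1
    have h2 := csInf_le hO2bdd hc2
    rw [heq]
    linarith
  · -- combine elements
    have key : ∀ c1 ∈ OSet y γ lam 0 m, ∀ c2 ∈ OSet y γ lam m T,
        sInf R ≤ c1 + c2 + lam := by
      intro c1 hc1 c2 hc2
      obtain ⟨p, τ1, hseg1, rfl⟩ := hc1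
      obtain ⟨q, τ2, hseg2, rfl⟩ := hc2
      obtain ⟨hseg, hmid, heq⟩ := objOpt_combine y γ lam hseg1 hseg2
      apply csInf_le hRbdd
      exact ⟨p+1+q, _, hseg, ⟨p+1, by omega, by omega, hmid⟩, heq.symm ▸ rfl⟩
    have h1 : ∀ c1 ∈ OSet y γ lam 0 m,
        sInf R - lam - sInf (OSet y γ lam m T) ≤ c1 := by
      intro c1 hc1
      have h2 : sInf R - lam - c1 ≤ sInf (OSet y γ lam m T) := by
        apply le_csInf hO2ne
        intro c2 hc2
        have := key c1 hc1 c2 hc2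
        linarith
      linarith
    have h3 : sInf R - lam - sInf (OSet y γ lam m T) ≤ sInf (OSet y γ lam 0 m) :=
      le_csInf hO1ne h1
    linarith
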